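/- arXiv:1905.13691 — 5 statements merged into one kernel-verified Lean document; each statement's English description precedes it below -/
import Mathlib

section
/- (Lemma 3.6) Let f_X be a probability density on ℝ and let D, d > 0 be such that f_X(x) ≤ D·e^{−d·x²} for all x ≥ 0. Let f_N denote the N-fold convolution of f_X (the density of the sum of N i.i.d. variables with density f_X). Then for all N ≥ 1 and all x ≥ 0, f_N(x) ≤ W^N · e^{−d·x²/N}, where W = D·√π/√d + 1 + D. (By symmetry, if instead f_X(x) ≤ D·e^{−d·x²} for all x ≤ 0, then f_N(x) ≤ W^N · e^{−d·x²/N} for all x ≤ 0.) -/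
open MeasureTheory Real Set Filter
open scoped ENNReal NNReal

noncomputable section

/-- Extended moment generating function `E[e^{tX}]` for a random variable with density `f`. -/
def MGFe (f : ℝ → ℝ) (t : ℝ) : ℝ≥0∞ :=
  ∫⁻ x, ENNReal.ofReal (Real.exp (t * x) * f x)

/-- Cumulant generating function (real-valued, meaningful where `MGFe` is finite). -/
def Lam (f : ℝ → ℝ) (t : ℝ) : ℝ := Real.log (MGFe f t).toReal

/-- Extended-real-valued cumulant generating function. -/
def ELam (f : ℝ → ℝ) (t : ℝ) : EReal :=
  if MGFe f t = ⊤ then ⊤ else ((Real.log (MGFe f t).toReal : ℝ) : EReal)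

/-- Legendre transform `Λ*(y) = sup_x (y·x − Λ(x))`, with values in `EReal`. -/
def LegendreE (f : ℝ → ℝ) (y : ℝ) : EReal :=
  ⨆ x : ℝ, ((y * x : ℝ) : EReal) - ELam f x

/-- `iterConv f N` is the `N`-fold convolution of the density `f`, i.e. the density of
`S_N = X₁ + ⋯ + X_N` for i.i.d. `Xᵢ` with density `f` (set to `0` for `N = 0`). -/
def iterConv (f : ℝ → ℝ) : ℕ → ℝ → ℝ
  | 0 => fun _ => 0
  | 1 => f
  | (n+2) => fun x => ∫ y, iterConv f (n+1) (x - y) * f y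

end

section Aux

lemma iterConv_one (f : ℝ → ℝ) : iterConv f 1 = f := rfl

lemma iterConv_succ_succ (f : ℝ → ℝ) (n : ℕ) (x : ℝ) :
    iterConv f (n+2) x = ∫ y, iterConv f (n+1) (x - y) * f y := rfl

lemma iterConv_nonneg {f : ℝ → ℝ} (hf : ∀ x, 0 ≤ f x) :
    ∀ N x, 0 ≤ iterConv f N x
  | 0, _ => le_refl 0
  | 1, x => hf x
  | (n+2), _ =>
    integral_nonneg fun y => mul_nonneg (iterConv_nonneg hf (n+1) _) (hf y)

lemma iterConv_meas {f : ℝ → ℝ} (hf : Measurable f) :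
    ∀ N, Measurable (iterConv f N)
  | 0 => measurable_const
  | 1 => hf
  | (n+2) => by
    have hm : StronglyMeasurable
        (Function.uncurry fun x y => iterConv f (n+1) (x - y) * f y) := by
      apply Measurable.stronglyMeasurable
      exact ((iterConv_meas hf (n+1)).comp (measurable_fst.sub measurable_snd)).mul
        (hf.comp measurable_snd)
    exact hm.integral_prod_right.measurable

lemma iterConv_eq_toReal {f : ℝ → ℝ} (hf0 : ∀ x, 0 ≤ f x) (hf : Measurable f)
    (n : ℕ) (x : ℝ) :
    iterConv f (n+2) x
      = (∫⁻ y, ENNReal.ofReal (iterConv f (n+1) (x - y)) * ENNReal.ofReal (f y)).toReal := by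
  have hFm : Measurable (iterConv f (n+1)) := iterConv_meas hf (n+1)
  have hm : AEStronglyMeasurable (fun y : ℝ => iterConv f (n+1) (x - y) * f y) volume :=
    ((hFm.comp (measurable_const.sub measurable_id)).mul hf).aestronglyMeasurable
  rw [iterConv_succ_succ,
    integral_eq_lintegral_of_nonneg_ae
      (ae_of_all _ fun y => mul_nonneg (iterConv_nonneg hf0 (n+1) _) (hf0 y)) hm]
  congr 1
  refine lintegral_congr fun y => ?_
  rw [ENNReal.ofReal_mul (iterConv_nonneg hf0 (n+1) _)]

lemma iterConv_mass {f : ℝ → ℝ} (hf0 : ∀ x, 0 ≤ f x) (hf : Measurable f)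
    (hmass : ∫⁻ x, ENNReal.ofReal (f x) = 1) :
    ∀ N, 1 ≤ N → ∫⁻ x, ENNReal.ofReal (iterConv f N x) = 1 := by
  intro N hN
  induction N, hN using Nat.le_induction with
  | base => simpa [iterConv_one] using hmass
  | succ N hN ih =>
    obtain ⟨m, rfl⟩ : ∃ m, N = m + 1 := ⟨N - 1, (Nat.succ_pred_eq_of_pos hN).symm⟩
    set F := iterConv f (m+1) with hF
    have hFm : Measurable F := iterConv_meas hf (m+1)
    set I : ℝ → ℝ≥0∞ := fun x => ∫⁻ y, ENNReal.ofReal (F (x - y)) * ENNReal.ofReal (f y)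
      with hI
    have hImeas : Measurable I :=
      Measurable.lintegral_prod_right
        ((ENNReal.measurable_ofReal.comp
          (hFm.comp (measurable_fst.sub measurable_snd))).mul
          (ENNReal.measurable_ofReal.comp (hf.comp measurable_snd)))
    have hTon : ∫⁻ x, I x = 1 := by
      have hswap : (∫⁻ x, I x)
          = ∫⁻ y, ∫⁻ x, ENNReal.ofReal (F (x - y)) * ENNReal.ofReal (f y) :=
        lintegral_lintegral_swap
          ((ENNReal.measurable_ofReal.comp
            (hFm.comp (measurable_fst.sub measurable_snd))).mul
            (ENNReal.measurable_ofReal.comp (hf.comp measurable_snd))).aemeasurable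
      rw [hswap]
      have hy : ∀ y : ℝ,
          (∫⁻ x, ENNReal.ofReal (F (x - y)) * ENNReal.ofReal (f y))
            = ENNReal.ofReal (f y) := by
        intro y
        have hmy : Measurable (fun x : ℝ => ENNReal.ofReal (F (x - y))) := by fun_prop
        have h1 : (∫⁻ x, ENNReal.ofReal (F (x - y))) = 1 :=
          (lintegral_sub_right_eq_self (fun z => ENNReal.ofReal (F z)) y).trans ih
        rw [lintegral_mul_const _ hmy, h1, one_mul]
      simp_rw [hy]
      exact hmass
    have hfin : ∀ᵐ x : ℝ, I x < ⊤ :=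
      ae_lt_top hImeas (by rw [hTon]; exact ENNReal.one_ne_top)
    have heq : ∀ᵐ x : ℝ, ENNReal.ofReal (iterConv f (m+2) x) = I x := by
      filter_upwards [hfin] with x hx
      rw [iterConv_eq_toReal hf0 hf m x, ENNReal.ofReal_toReal hx.ne]
    rw [show m + 1 + 1 = m + 2 from rfl, lintegral_congr_ae heq, hTon]

end Aux

section Main

lemma main_right {f : ℝ → ℝ} {D d : ℝ}
    (hf_nonneg : ∀ x, 0 ≤ f x)
    (hf_meas : Measurable f)
    (hf_mass : ∫⁻ x, ENNReal.ofReal (f x) = 1)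
    (hD : 0 < D) (hd : 0 < d)
    (hb : ∀ x : ℝ, 0 ≤ x → f x ≤ D * Real.exp (-d * x ^ 2)) :
    ∀ N : ℕ, 1 ≤ N → ∀ x : ℝ, 0 ≤ x →
      iterConv f N x ≤
        (D * Real.sqrt Real.pi / Real.sqrt d + 1 + D) ^ N *
          Real.exp (-d * x ^ 2 / N) := by
  set W : ℝ := D * Real.sqrt Real.pi / Real.sqrt d + 1 + D with hWdef
  have hsd : 0 < Real.sqrt d := Real.sqrt_pos.mpr hd
  have hw0 : 0 ≤ D * Real.sqrt Real.pi / Real.sqrt d :=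
    div_nonneg (mul_nonneg hD.le (Real.sqrt_nonneg _)) hsd.le
  have hW1 : 1 ≤ W := by rw [hWdef]; nlinarith
  have hWpos : 0 < W := lt_of_lt_of_le one_pos hW1
  intro N hN
  induction N, hN using Nat.le_induction with
  | base =>
    intro x hx
    rw [iterConv_one]
    calc f x ≤ D * Real.exp (-d * x ^ 2) := hb x hx
      _ ≤ W ^ 1 * Real.exp (-d * x ^ 2 / (1 : ℕ)) := by
          rw [pow_one]
          push_cast
          rw [div_one]
          have : D ≤ W := by rw [hWdef]; nlinarith
          exact mul_le_mul_of_nonneg_right this (Real.exp_nonneg _)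
  | succ N hN ih =>
    intro x hx
    obtain ⟨m, rfl⟩ : ∃ m, N = m + 1 := ⟨N - 1, (Nat.succ_pred_eq_of_pos hN).symm⟩
    set n : ℝ := ((m + 1 : ℕ) : ℝ) with hn'
    have hn1 : (1 : ℝ) ≤ n := by rw [hn']; exact_mod_cast hN
    have hnpos : (0 : ℝ) < n := lt_of_lt_of_le one_pos hn1
    set E : ℝ := Real.exp (-d * x ^ 2 / (n + 1)) with hE
    have hEpos : 0 < E := Real.exp_pos _
    set F := iterConv f (m + 1) with hF
    have hFm : Measurable F := iterConv_meas hf_meas (m + 1)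
    have hFb : ∀ z : ℝ, 0 ≤ z → F z ≤ W ^ (m+1) * Real.exp (-d * z ^ 2 / n) :=
      fun z hz => ih z hz
    have key : (∫⁻ y, ENNReal.ofReal (F (x - y)) * ENNReal.ofReal (f y))
        ≤ ENNReal.ofReal (W ^ (m+1+1) * E) := by
      set G : ℝ → ℝ≥0∞ := fun y => ENNReal.ofReal (F (x - y)) * ENNReal.ofReal (f y)
        with hG
      have hsplit : (∫⁻ y, G y)
          = (∫⁻ y in Iio (0:ℝ), G y) + ((∫⁻ y in Icc (0:ℝ) x, G y)
              + (∫⁻ y in Ioi x, G y)) := by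
        rw [← setLIntegral_univ (f := G), ← Iio_union_Ici (a := (0:ℝ)),
          lintegral_union measurableSet_Ici (Iio_disjoint_Ici le_rfl),
          ← Icc_union_Ioi_eq_Ici hx,
          lintegral_union measurableSet_Ioi
            (Set.disjoint_left.mpr fun y hy hy' => (not_le.mpr hy') hy.2)]
      -- bound on Iio 0
      have hb1 : (∫⁻ y in Iio (0:ℝ), G y) ≤ ENNReal.ofReal (W ^ (m+1) * E) := by
        have hpt : ∀ y ∈ Iio (0:ℝ),
            G y ≤ ENNReal.ofReal (W ^ (m+1) * E) * ENNReal.ofReal (f y) := by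
          intro y hy
          have hy0 : y < 0 := hy
          apply mul_le_mul_left
          apply ENNReal.ofReal_le_ofReal
          have hxy : 0 ≤ x - y := by linarith
          calc F (x - y) ≤ W ^ (m+1) * Real.exp (-d * (x - y) ^ 2 / n) := hFb _ hxy
            _ ≤ W ^ (m+1) * E := by
                apply mul_le_mul_of_nonneg_left _ (by positivity)
                rw [hE]
                apply Real.exp_le_exp.mpr
                have hsq : d * x ^ 2 ≤ d * (x - y) ^ 2 := by
                  nlinarith [mul_nonneg hd.le (mul_nonneg hx (neg_nonneg.mpr hy0.le)),
                    mul_nonneg hd.le (sq_nonneg y)]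
                have h2 : d * x ^ 2 / (n + 1) ≤ d * (x - y) ^ 2 / n :=
                  div_le_div₀ (by positivity) hsq hnpos (by linarith)
                have e1 : -d * (x - y) ^ 2 / n = -(d * (x - y) ^ 2 / n) := by ring
                have e2 : -d * x ^ 2 / (n + 1) = -(d * x ^ 2 / (n + 1)) := by ring
                rw [e1, e2]
                exact neg_le_neg h2
        calc (∫⁻ y in Iio (0:ℝ), G y)
            ≤ ∫⁻ y in Iio (0:ℝ), ENNReal.ofReal (W ^ (m+1) * E) * ENNReal.ofReal (f y) :=
              setLIntegral_mono
                ((ENNReal.measurable_ofReal.comp hf_meas).const_mul _) hpt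
          _ = ENNReal.ofReal (W ^ (m+1) * E) * ∫⁻ y in Iio (0:ℝ), ENNReal.ofReal (f y) :=
              lintegral_const_mul _ (ENNReal.measurable_ofReal.comp hf_meas)
          _ ≤ ENNReal.ofReal (W ^ (m+1) * E) * 1 := by
              apply mul_le_mul_right
              rw [← hf_mass]
              exact setLIntegral_le_lintegral _ _
          _ = ENNReal.ofReal (W ^ (m+1) * E) := mul_one _
      -- bound on Ioi x
      have hb3 : (∫⁻ y in Ioi x, G y) ≤ ENNReal.ofReal (D * E) := by
        have hFrefl : Measurable (fun y : ℝ => ENNReal.ofReal (F (x - y))) :=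
          (ENNReal.measurable_ofReal.comp hFm).comp (measurable_const.sub measurable_id)
        have hpt : ∀ y ∈ Ioi x,
            G y ≤ ENNReal.ofReal (F (x - y)) * ENNReal.ofReal (D * E) := by
          intro y hy
          have hy' : x < y := hy
          apply mul_le_mul_right
          apply ENNReal.ofReal_le_ofReal
          calc f y ≤ D * Real.exp (-d * y ^ 2) := hb y (by linarith)
            _ ≤ D * E := by
                apply mul_le_mul_of_nonneg_left _ hD.le
                rw [hE]
                apply Real.exp_le_exp.mpr
                have h1 : d * x ^ 2 ≤ d * y ^ 2 := by
                  nlinarith [mul_nonneg hd.le (mul_nonneg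
                    (by linarith : (0:ℝ) ≤ y - x) (by linarith : (0:ℝ) ≤ y + x))]
                have h2 : d * x ^ 2 / (n + 1) ≤ d * x ^ 2 :=
                  div_le_self (by positivity) (by linarith)
                have e1 : -d * y ^ 2 = -(d * y ^ 2) := by ring
                have e2 : -d * x ^ 2 / (n + 1) = -(d * x ^ 2 / (n + 1)) := by ring
                rw [e1, e2]
                exact neg_le_neg (le_trans h2 h1)
        calc (∫⁻ y in Ioi x, G y)
            ≤ ∫⁻ y in Ioi x, ENNReal.ofReal (F (x - y)) * ENNReal.ofReal (D * E) :=
              setLIntegral_mono (hFrefl.mul_const _) hpt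
          _ = (∫⁻ y in Ioi x, ENNReal.ofReal (F (x - y))) * ENNReal.ofReal (D * E) :=
              lintegral_mul_const _ hFrefl
          _ ≤ (∫⁻ y, ENNReal.ofReal (F (x - y))) * ENNReal.ofReal (D * E) :=
              mul_le_mul_left (setLIntegral_le_lintegral _ _) _
          _ = 1 * ENNReal.ofReal (D * E) := by
              congr 1
              have hsub : (∫⁻ y, ENNReal.ofReal (F (x - y)))
                  = ∫⁻ y, ENNReal.ofReal (F y) :=
                (Measure.measurePreserving_sub_left (volume : Measure ℝ) x).lintegral_comp
                  (ENNReal.measurable_ofReal.comp hFm)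
              rw [hsub]
              exact iterConv_mass hf_nonneg hf_meas hf_mass (m+1)
                (Nat.succ_le_succ (Nat.zero_le m))
          _ = ENNReal.ofReal (D * E) := one_mul _
      -- bound on Icc 0 x
      have hb2 : (∫⁻ y in Icc (0:ℝ) x, G y)
          ≤ ENNReal.ofReal (W ^ (m+1) * D * E * (Real.sqrt Real.pi / Real.sqrt d)) := by
        set c : ℝ := x / (n + 1) with hc
        have hgm : Measurable (fun y : ℝ => ENNReal.ofReal (Real.exp (-d * (y - c) ^ 2))) :=
          ENNReal.measurable_ofReal.comp
            (Real.measurable_exp.comp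
              (((measurable_id.sub measurable_const).pow_const 2).const_mul (-d)))
        have hpt : ∀ y ∈ Icc (0:ℝ) x,
            G y ≤ ENNReal.ofReal (W ^ (m+1) * D * E)
              * ENNReal.ofReal (Real.exp (-d * (y - c) ^ 2)) := by
          intro y hy
          obtain ⟨hy0, hyx⟩ := hy
          have hxy : 0 ≤ x - y := by linarith
          have step1 : G y ≤ ENNReal.ofReal (W ^ (m+1) * Real.exp (-d * (x - y) ^ 2 / n))
              * ENNReal.ofReal (D * Real.exp (-d * y ^ 2)) :=
            mul_le_mul' (ENNReal.ofReal_le_ofReal (hFb _ hxy))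
              (ENNReal.ofReal_le_ofReal (hb y hy0))
          refine step1.trans ?_
          rw [← ENNReal.ofReal_mul (by positivity), ← ENNReal.ofReal_mul (by positivity)]
          apply ENNReal.ofReal_le_ofReal
          have hexp : Real.exp (-d * (x - y) ^ 2 / n) * Real.exp (-d * y ^ 2)
              ≤ E * Real.exp (-d * (y - c) ^ 2) := by
            rw [← Real.exp_add, hE, ← Real.exp_add]
            apply Real.exp_le_exp.mpr
            have hid : (x - y) ^ 2 / n + y ^ 2
                = x ^ 2 / (n + 1) + (y - c) ^ 2 + (y - c) ^ 2 / n := by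
              rw [hc]; field_simp; ring
            have hq : x ^ 2 / (n + 1) + (y - c) ^ 2 ≤ (x - y) ^ 2 / n + y ^ 2 := by
              rw [hid]
              have : 0 ≤ (y - c) ^ 2 / n := by positivity
              linarith
            have e1 : -d * (x - y) ^ 2 / n + -d * y ^ 2
                = -(d * ((x - y) ^ 2 / n + y ^ 2)) := by ring
            have e2 : -d * x ^ 2 / (n + 1) + -d * (y - c) ^ 2
                = -(d * (x ^ 2 / (n + 1) + (y - c) ^ 2)) := by ring
            rw [e1, e2, neg_le_neg_iff]
            exact mul_le_mul_of_nonneg_left hq hd.le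
          calc W ^ (m+1) * Real.exp (-d * (x - y) ^ 2 / n) * (D * Real.exp (-d * y ^ 2))
              = W ^ (m+1) * D * (Real.exp (-d * (x - y) ^ 2 / n) * Real.exp (-d * y ^ 2)) := by
                ring
            _ ≤ W ^ (m+1) * D * (E * Real.exp (-d * (y - c) ^ 2)) :=
                mul_le_mul_of_nonneg_left hexp (by positivity)
            _ = W ^ (m+1) * D * E * Real.exp (-d * (y - c) ^ 2) := by ring
        have hGauss : (∫⁻ y, ENNReal.ofReal (Real.exp (-d * (y - c) ^ 2)))
            = ENNReal.ofReal (Real.sqrt Real.pi / Real.sqrt d) := by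
          have h1 : (∫⁻ y, ENNReal.ofReal (Real.exp (-d * (y - c) ^ 2)))
              = ∫⁻ y, ENNReal.ofReal (Real.exp (-d * y ^ 2)) :=
            lintegral_sub_right_eq_self (fun z => ENNReal.ofReal (Real.exp (-d * z ^ 2))) c
          rw [h1, ← ofReal_integral_eq_lintegral_ofReal (integrable_exp_neg_mul_sq hd)
              (ae_of_all _ fun z => (Real.exp_nonneg _)),
            integral_gaussian, Real.sqrt_div Real.pi_pos.le]
        calc (∫⁻ y in Icc (0:ℝ) x, G y)
            ≤ ∫⁻ y in Icc (0:ℝ) x, ENNReal.ofReal (W ^ (m+1) * D * E)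
                * ENNReal.ofReal (Real.exp (-d * (y - c) ^ 2)) :=
              setLIntegral_mono (hgm.const_mul _) hpt
          _ ≤ ∫⁻ y, ENNReal.ofReal (W ^ (m+1) * D * E)
                * ENNReal.ofReal (Real.exp (-d * (y - c) ^ 2)) :=
              setLIntegral_le_lintegral _ _
          _ = ENNReal.ofReal (W ^ (m+1) * D * E)
                * ∫⁻ y, ENNReal.ofReal (Real.exp (-d * (y - c) ^ 2)) :=
              lintegral_const_mul _ hgm
          _ = ENNReal.ofReal (W ^ (m+1) * D * E)
                * ENNReal.ofReal (Real.sqrt Real.pi / Real.sqrt d) := by rw [hGauss]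
          _ = ENNReal.ofReal (W ^ (m+1) * D * E * (Real.sqrt Real.pi / Real.sqrt d)) := by
              rw [← ENNReal.ofReal_mul (by positivity)]
      -- combine
      rw [hsplit]
      calc (∫⁻ y in Iio (0:ℝ), G y) + ((∫⁻ y in Icc (0:ℝ) x, G y) + (∫⁻ y in Ioi x, G y))
          ≤ ENNReal.ofReal (W ^ (m+1) * E)
            + (ENNReal.ofReal (W ^ (m+1) * D * E * (Real.sqrt Real.pi / Real.sqrt d))
              + ENNReal.ofReal (D * E)) :=
            add_le_add hb1 (add_le_add hb2 hb3)
        _ = ENNReal.ofReal (W ^ (m+1) * E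
              + (W ^ (m+1) * D * E * (Real.sqrt Real.pi / Real.sqrt d) + D * E)) := by
            rw [ENNReal.ofReal_add (by positivity) (by positivity),
              ENNReal.ofReal_add (by positivity) (by positivity)]
        _ ≤ ENNReal.ofReal (W ^ (m+1+1) * E) := by
            apply ENNReal.ofReal_le_ofReal
            have hWN : 1 ≤ W ^ (m+1) := one_le_pow₀ hW1
            have hDE : D * E ≤ W ^ (m+1) * (D * E) :=
              le_mul_of_one_le_left (mul_nonneg hD.le hEpos.le) hWN
            have hfin : W ^ (m+1) * E
                + (W ^ (m+1) * D * E * (Real.sqrt Real.pi / Real.sqrt d)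
                  + W ^ (m+1) * (D * E)) = W ^ (m+1+1) * E := by
              rw [pow_succ W (m+1), hWdef]; ring
            linarith
    -- conclude
    have hrepr : iterConv f (m+1+1) x
        = (∫⁻ y, ENNReal.ofReal (F (x - y)) * ENNReal.ofReal (f y)).toReal :=
      iterConv_eq_toReal hf_nonneg hf_meas m x
    rw [hrepr]
    apply ENNReal.toReal_le_of_le_ofReal (by positivity)
    have hcast : Real.exp (-d * x ^ 2 / ((m+1+1 : ℕ) : ℝ)) = E := by
      rw [hE, hn']; push_cast; ring_nf
    rw [hcast]
    exact key

lemma iterConv_neg (f : ℝ → ℝ) :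
    ∀ N x, iterConv (fun z => f (-z)) N x = iterConv f N (-x)
  | 0, _ => rfl
  | 1, _ => rfl
  | (n+2), x => by
    have h : (∫ y : ℝ, iterConv f (n+1) (-x - (-y)) * f (-y))
        = ∫ y, iterConv f (n+1) (-x - y) * f y :=
      integral_neg_eq_self (fun y => iterConv f (n+1) (-x - y) * f y) volume
    rw [iterConv_succ_succ, iterConv_succ_succ, ← h]
    congr 1
    funext y
    rw [iterConv_neg f (n+1)]
    have harg : -(x - y) = -x - -y := by ring
    rw [harg]

end Main

/-- **Lemma 3.6.** If the probability density `f_X` satisfies a one-sided Gaussian bound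
`f_X(x) ≤ D e^{−d x²}` (for all `x ≥ 0`, resp. all `x ≤ 0`), then the `N`-fold convolution
satisfies `f_N(x) ≤ W^N e^{−d x²/N}` on the same half-line, with
`W = D√π/√d + 1 + D`. -/
theorem lemma_3_6
    (f : ℝ → ℝ) (D d : ℝ)
    (hf_nonneg : ∀ x, 0 ≤ f x)
    (hf_meas : Measurable f)
    (hf_mass : ∫⁻ x, ENNReal.ofReal (f x) = 1)
    (hD : 0 < D) (hd : 0 < d) :
    ((∀ x : ℝ, 0 ≤ x → f x ≤ D * Real.exp (-d * x ^ 2)) →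
      ∀ N : ℕ, 1 ≤ N → ∀ x : ℝ, 0 ≤ x →
        iterConv f N x ≤
          (D * Real.sqrt Real.pi / Real.sqrt d + 1 + D) ^ N *
            Real.exp (-d * x ^ 2 / N)) ∧
    ((∀ x : ℝ, x ≤ 0 → f x ≤ D * Real.exp (-d * x ^ 2)) →
      ∀ N : ℕ, 1 ≤ N → ∀ x : ℝ, x ≤ 0 →
        iterConv f N x ≤
          (D * Real.sqrt Real.pi / Real.sqrt d + 1 + D) ^ N *
            Real.exp (-d * x ^ 2 / N)) := by
  constructor
  · intro hb
    exact main_right hf_nonneg hf_meas hf_mass hD hd hb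
  · intro hb N hN x hx
    have hg0 : ∀ z : ℝ, 0 ≤ f (-z) := fun z => hf_nonneg _
    have hgm : Measurable (fun z : ℝ => f (-z)) := hf_meas.comp measurable_neg
    have hgmass : (∫⁻ z : ℝ, ENNReal.ofReal (f (-z))) = 1 :=
      ((Measure.measurePreserving_neg (volume : Measure ℝ)).lintegral_comp
        (ENNReal.measurable_ofReal.comp hf_meas)).trans hf_mass
    have hgb : ∀ z : ℝ, 0 ≤ z → f (-z) ≤ D * Real.exp (-d * z ^ 2) := by
      intro z hz
      have := hb (-z) (neg_nonpos.mpr hz)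
      simpa [neg_sq] using this
    have h := main_right hg0 hgm hgmass hD hd hgb N hN (-x) (neg_nonneg.mpr hx)
    rw [iterConv_neg f N (-x), neg_neg] at h
    simpa [neg_sq] using h
end

section
/- (Lemma 7.2, case α > −∞) Let X be an integer-valued random variable and α ∈ ℤ with P(X ≥ α) = 1, and let X₁, X₂, … be i.i.d. copies of X with partial sums S_k = X₁ + ⋯ + X_k. Then for every b̂ > 0, setting â = b̂/(1 + b̂ + |α|), the following holds: for every n ≥ 1 and every z ∈ ℤ with P(S_n = z) > 0, E[ exp( â · max_{1 ≤ k ≤ n} |S_k| ) | S_n = z ] ≤ exp( b̂ · (n + z²/n) ). -/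
open MeasureTheory Real Set Filter
open scoped ENNReal NNReal

private lemma aux_tsum_div_le {ι : Type*} (f g : ι → ℝ) (C : ℝ) (hC : 0 < C)
    (h0 : ∀ x, 0 ≤ g x) (h1 : ∀ x, g x ≤ f x) (h2 : ∀ x, f x ≤ C * g x)
    (hpos : 0 < ∑' x, g x) : (∑' x, f x) / (∑' x, g x) ≤ C := by
  rw [div_le_iff₀ hpos]
  by_cases hs : Summable f
  · have hgs : Summable g := Summable.of_nonneg_of_le h0 h1 hs
    calc (∑' x, f x) ≤ ∑' x, C * g x := Summable.tsum_le_tsum h2 hs (hgs.mul_left C)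
      _ = C * ∑' x, g x := tsum_mul_left
  · rw [tsum_eq_zero_of_not_summable hs]
    exact le_of_lt (mul_pos hC hpos)

/-- **Lemma 7.2 (case `α > −∞`).** For an integer random variable `X` with `P(X ≥ α) = 1`,
the conditional exponential moment of `max_{1 ≤ k ≤ n} |S_k|` given `{S_n = z}` satisfies
`E[exp(â max_{1≤k≤n}|S_k|) | S_n = z] ≤ exp(b̂ (n + z²/n))` with
`â = b̂/(1 + b̂ + |α|)`.  The conditional expectation is expressed as a sum over increment
vectors `x : Fin n → ℤ`, each path having probability `∏ᵢ p(xᵢ)`, with partial sums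
`S_m = x₀ + ⋯ + x_{m−1}`. -/
theorem lemma_7_2_alpha_finite
    (p : ℤ → ℝ) (α : ℤ)
    (hp_nonneg : ∀ k, 0 ≤ p k)
    (hp_mass : ∑' k : ℤ, p k = 1)
    (hsupp : ∀ k : ℤ, k < α → p k = 0)
    (bhat : ℝ) (hbhat : 0 < bhat)
    (n : ℕ) (hn : 1 ≤ n) (z : ℤ)
    -- `P(S_n = z) > 0`
    (hpos : 0 < ∑' x : Fin n → ℤ, (if (∑ i, x i) = z then ∏ i, p (x i) else 0)) :
    (∑' x : Fin n → ℤ,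
        (if (∑ i, x i) = z then
          Real.exp ((bhat / (1 + bhat + |(α : ℝ)|)) *
            (((Finset.Icc 1 n).sup fun m =>
              (∑ i : Fin n, if (i : ℕ) < m then x i else 0).natAbs : ℕ) : ℝ)) *
            ∏ i, p (x i)
        else 0)) /
      (∑' x : Fin n → ℤ, (if (∑ i, x i) = z then ∏ i, p (x i) else 0)) ≤
      Real.exp (bhat * ((n : ℝ) + (z : ℝ) ^ 2 / n)) := by
  classical
  have ha : (0:ℝ) ≤ |(α : ℝ)| := abs_nonneg _
  have hd : (0:ℝ) < 1 + bhat + |(α : ℝ)| := by linarith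
  have hApos : 0 < bhat / (1 + bhat + |(α : ℝ)|) := div_pos hbhat hd
  have hN : (1:ℝ) ≤ (n : ℝ) := by exact_mod_cast hn
  have hNpos : (0:ℝ) < (n : ℝ) := by linarith
  -- key real inequality
  have hkey : (bhat / (1 + bhat + |(α : ℝ)|)) * (|(z:ℝ)| + n * |(α:ℝ)|) ≤
      bhat * ((n:ℝ) + (z:ℝ)^2 / n) := by
    rw [div_mul_eq_mul_div, div_le_iff₀ hd]
    have h1 : (z:ℝ)^2 / n * n = (z:ℝ)^2 := div_mul_cancel₀ _ (ne_of_gt hNpos)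
    have ht : 0 ≤ (z:ℝ)^2 / n := div_nonneg (sq_nonneg _) hNpos.le
    nlinarith [sq_nonneg (|(z:ℝ)| - n), sq_abs (z:ℝ), abs_nonneg (z:ℝ),
      mul_nonneg (mul_nonneg ht hbhat.le) hNpos.le,
      mul_nonneg (mul_nonneg ht ha) hNpos.le,
      mul_nonneg hbhat.le (mul_nonneg hNpos.le hNpos.le),
      mul_nonneg (mul_nonneg hbhat.le ha) hNpos.le]
  apply aux_tsum_div_le _ _ _ (Real.exp_pos _)
  · intro x
    split_ifs
    · exact Finset.prod_nonneg fun i _ => hp_nonneg _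
    · exact le_rfl
  · intro x
    split_ifs
    · refine le_mul_of_one_le_left (Finset.prod_nonneg fun i _ => hp_nonneg _) ?_
      exact Real.one_le_exp (mul_nonneg hApos.le (Nat.cast_nonneg _))
    · exact le_rfl
  · intro x
    split_ifs with hzx
    · by_cases hP : ∏ i, p (x i) = 0
      · simp [hP]
      · have hPpos : 0 ≤ ∏ i, p (x i) := Finset.prod_nonneg fun i _ => hp_nonneg _
        have hxα : ∀ i, α ≤ x i := by
          intro i
          by_contra hlt
          exact hP (Finset.prod_eq_zero (Finset.mem_univ i) (hsupp _ (lt_of_not_ge hlt)))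
        -- bound on the max of partial sums
        have hnat : ((Finset.Icc 1 n).sup fun m =>
            (∑ i : Fin n, if (i : ℕ) < m then x i else 0).natAbs) ≤
            z.natAbs + n * α.natAbs := by
          apply Finset.sup_le
          intro m _
          have hlow : -((n:ℤ) * |α|) ≤ ∑ i : Fin n, if (i : ℕ) < m then x i else 0 := by
            have : ∑ _i : Fin n, (-|α|) ≤ ∑ i : Fin n, if (i : ℕ) < m then x i else 0 := by
              apply Finset.sum_le_sum
              intro i _
              split_ifs
              · exact le_trans (neg_abs_le α) (hxα i)
              · exact neg_nonpos.mpr (abs_nonneg α)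
            simpa [Finset.sum_const, mul_comm] using this
          have hsplit : (∑ i : Fin n, if (i : ℕ) < m then x i else 0) +
              (∑ i : Fin n, if (i : ℕ) < m then 0 else x i) = z := by
            rw [← Finset.sum_add_distrib, ← hzx]
            apply Finset.sum_congr rfl
            intro i _
            split_ifs <;> ring
          have hlow2 : -((n:ℤ) * |α|) ≤ ∑ i : Fin n, if (i : ℕ) < m then 0 else x i := by
            have : ∑ _i : Fin n, (-|α|) ≤ ∑ i : Fin n, if (i : ℕ) < m then 0 else x i := by
              apply Finset.sum_le_sum
              intro i _
              split_ifs
              · exact neg_nonpos.mpr (abs_nonneg α)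
              · exact le_trans (neg_abs_le α) (hxα i)
            simpa [Finset.sum_const, mul_comm] using this
          have hupp : (∑ i : Fin n, if (i : ℕ) < m then x i else 0) ≤ z + (n:ℤ) * |α| := by
            linarith
          have habs : |∑ i : Fin n, if (i : ℕ) < m then x i else 0| ≤ |z| + (n:ℤ) * |α| := by
            rw [abs_le]
            constructor
            · have h0 := abs_nonneg z
              linarith
            · have := le_abs_self z
              linarith
          have : ((∑ i : Fin n, if (i : ℕ) < m then x i else 0).natAbs : ℤ) ≤
              ((z.natAbs + n * α.natAbs : ℕ) : ℤ) := by
            push_cast [Int.natCast_natAbs]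
            exact habs
          exact_mod_cast this
        have hM : (((Finset.Icc 1 n).sup fun m =>
            (∑ i : Fin n, if (i : ℕ) < m then x i else 0).natAbs : ℕ) : ℝ) ≤
            |(z:ℝ)| + n * |(α:ℝ)| := by
          have := (Nat.cast_le (α := ℝ)).mpr hnat
          refine le_trans this (le_of_eq ?_)
          push_cast [Nat.cast_natAbs]
          ring
        refine mul_le_mul_of_nonneg_right (Real.exp_le_exp.mpr ?_) hPpos
        exact le_trans (mul_le_mul_of_nonneg_left hM hApos.le) hkey
    · simp
  · exact hpos
end

section
/- (Section 7.2, counterexample) Let A = {3^n + n : n ∈ ℕ, n ≥ 1} and B = {−3^n : n ∈ ℕ, n ≥ 1}. Define w : ℤ → ℝ by w(x) = exp(−x²) if x ∈ A ∪ B and w(x) = exp(−10^{10^{|x|}}) otherwise, let Z = Σ_{x ∈ ℤ} w(x) (which is finite) and p_X(x) = w(x)/Z. Then p_X is a probability mass function on ℤ, positive everywhere, satisfying p_X(x) ≤ Z^{−1}·e^{−x²}, and for every choice of a, c, C > 0 there exists z ∈ ℤ with P(X₁ + X₂ = z) > 0 such that E[ e^{a·|X₁|} | X₁ + X₂ = z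 ] ≥ C · e^{c·z²}, where X₁, X₂ are i.i.d. with probability mass function p_X. -/
open MeasureTheory Real Set Filter
open scoped ENNReal NNReal

noncomputable section

/-- The set `A = {3^n + n : n ≥ 1}` of spike locations on the positive side. -/
def spikeA (x : ℤ) : Prop := ∃ n : ℕ, 1 ≤ n ∧ x = 3 ^ n + n

/-- The set `B = {−3^n : n ≥ 1}` of spike locations on the negative side. -/
def spikeB (x : ℤ) : Prop := ∃ n : ℕ, 1 ≤ n ∧ x = -(3 ^ n : ℤ)

open scoped Classical in
/-- The weight function `w(x) = e^{−x²}` on `A ∪ B` and `w(x) = e^{−g(x)}`,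
`g(x) = 10^{10^{|x|}}`, elsewhere. -/
def wfun (x : ℤ) : ℝ :=
  if spikeA x ∨ spikeB x then Real.exp (-(x : ℝ) ^ 2)
  else Real.exp (-((10 : ℝ) ^ ((10 : ℝ) ^ x.natAbs)))

/-- The normalizing constant `Z = Σ_{x ∈ ℤ} w(x)`. -/
def Zw : ℝ := ∑' x : ℤ, wfun x

/-- The probability mass function `p_X(x) = w(x)/Z`. -/
def pCtr (x : ℤ) : ℝ := wfun x / Zw

end

/-!
Take `z = 3 ^ k` with `k` even and put `N = 3 ^ k`. The only way to write `z` as a sum of two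
spikes is `(3 ^ N + N) + (-3 ^ N)`; evenness of `k` rules out the decomposition
`(3 ^ k + k) + (-3 ^ l)` that would exist if `k = 3 ^ l`. In every other decomposition
`z = j + (z - j)` one summand is a non-spike of absolute value at least `k`, whose weight
`exp (-10 ^ 10 ^ k)` is at most the product `w (3 ^ N + N) * w (-3 ^ N)` of the spike weights.
Hence, with `P = p (3 ^ N + N) * p (-3 ^ N)`, we get `P(X₁ + X₂ = z) ≤ 2 (1 + Z) P`, whereas
`E[e^{a|X₁|}; X₁ + X₂ = z] ≥ e^{a 3^N} P`, and `3 ^ N = 3 ^ 3 ^ k` outgrows `z ^ 2 = 9 ^ k`.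
-/

theorem Summable.tsum_le_sum_add_tsum {β : Type*} {f g : β → ℝ} (s : Finset β)
    (hf : Summable f) (hg : Summable g) (hg₀ : ∀ b, 0 ≤ g b) (hfg : ∀ b ∉ s, f b ≤ g b) :
    ∑' b, f b ≤ ∑ b ∈ s, f b + ∑' b, g b := by
  rw [← hf.sum_add_tsum_compl (s := s)]
  gcongr
  calc ∑' b : ↑(↑s : Set β)ᶜ, f b ≤ ∑' b : ↑(↑s : Set β)ᶜ, g b :=
        (hf.subtype _).tsum_le_tsum (fun b => hfg b b.2) (hg.subtype _)
  _ ≤ ∑' b, g b := Summable.tsum_subtype_le g _ hg₀ hg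

lemma summable_exp_neg_abs_int : Summable fun j : ℤ => exp (-|(j : ℝ)|) := by
  refine Summable.of_nat_of_neg ?_ ?_ <;> simpa using Real.summable_exp_neg_nat

lemma summable_exp_mul_abs_mul_exp_neg_sq (a : ℝ) :
    Summable fun j : ℤ => exp (a * |(j : ℝ)|) * exp (-(j : ℝ) ^ 2) := by
  refine (summable_exp_neg_abs_int.mul_left (exp ((a + 1) ^ 2))).of_nonneg_of_le
    (fun _ => by positivity) fun j => ?_
  rw [← exp_add, ← exp_add, exp_le_exp, ← sq_abs]
  nlinarith [sq_nonneg (|(j : ℝ)| - (a + 1))]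

lemma two_mul_lt_three_pow (n : ℕ) : 2 * n < 3 ^ n := by
  have h := one_add_mul_le_pow (a := (2 : ℤ)) (by norm_num) n
  norm_num at h
  zify
  linarith

lemma two_mul_three_pow_add_lt (m : ℕ) : 2 * (3 ^ m + m) < 3 ^ (m + 1) := by
  have := two_mul_lt_three_pow m
  rw [pow_succ]
  omega

lemma three_mul_le_three_pow (k : ℕ) : 3 * k ≤ 3 ^ k := by
  rcases k with _ | k
  · simp
  · have := Nat.lt_pow_self (n := k) (by norm_num : 1 < 3)
    rw [pow_succ]
    omega

lemma mul_nine_pow_le (k : ℕ) : k * 9 ^ k ≤ 3 ^ 3 ^ k :=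
  calc k * 9 ^ k ≤ 3 ^ k * 9 ^ k := Nat.mul_le_mul_right _ (Nat.lt_pow_self (by norm_num)).le
  _ = 3 ^ (3 * k) := by rw [← Nat.mul_pow, pow_mul]; norm_num
  _ ≤ 3 ^ 3 ^ k := Nat.pow_le_pow_right (by norm_num) (three_mul_le_three_pow k)

lemma nine_pow (n : ℕ) : 9 ^ n = (3 ^ n) ^ 2 := by
  rw [← pow_mul, mul_comm, pow_mul]; norm_num

lemma sq_le_ten_pow_ten_pow (t : ℕ) : t ^ 2 ≤ 10 ^ 10 ^ t :=
  calc t ^ 2 ≤ (3 ^ t) ^ 2 := Nat.pow_le_pow_left (Nat.lt_pow_self (by norm_num)).le 2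
  _ = 9 ^ t := (nine_pow t).symm
  _ ≤ 10 ^ t := Nat.pow_le_pow_left (by norm_num) t
  _ ≤ 10 ^ 10 ^ t := Nat.pow_le_pow_right (by norm_num) (Nat.lt_pow_self (by norm_num)).le

lemma three_pow_add_sq_add_sq_le {N t : ℕ} (h : N < 10 ^ t) :
    (3 ^ N + N) ^ 2 + (3 ^ N) ^ 2 ≤ 10 ^ 10 ^ t :=
  calc (3 ^ N + N) ^ 2 + (3 ^ N) ^ 2 ≤ (2 * 3 ^ N) ^ 2 + (3 ^ N) ^ 2 := by
        gcongr
        have := (Nat.lt_pow_self (n := N) (by norm_num : 1 < 3)).le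
        omega
  _ = 5 * 9 ^ N := by rw [nine_pow]; ring
  _ ≤ 10 * 10 ^ N := by gcongr <;> norm_num
  _ = 10 ^ (N + 1) := by ring
  _ ≤ 10 ^ 10 ^ t := Nat.pow_le_pow_right (by norm_num) h

lemma eq_of_three_pow_add_eq {k m l : ℕ} (hk : Even k) (h : 3 ^ m + m = 3 ^ k + 3 ^ l) :
    m = 3 ^ k ∧ l = 3 ^ k := by
  have hm := two_mul_three_pow_add_lt m
  have hk₀ : 0 < 3 ^ k := by positivity
  have hl₀ : 0 < 3 ^ l := by positivity
  rcases lt_trichotomy m l with hml | rfl | hlm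
  · have : 3 ^ (m + 1) ≤ 3 ^ l := Nat.pow_le_pow_right (by norm_num) hml
    omega
  · omega
  rcases lt_trichotomy m k with hmk | rfl | hkm
  · have : 3 ^ (m + 1) ≤ 3 ^ k := Nat.pow_le_pow_right (by norm_num) hmk
    omega
  · have hm3 : m = 3 ^ l := by omega
    exact absurd (hm3 ▸ hk) (Nat.not_even_iff_odd.mpr (Odd.pow (by decide)))
  · have h₁ : 3 ^ (k + 1) ≤ 3 ^ m := Nat.pow_le_pow_right (by norm_num) hkm
    have h₂ : 3 ^ (l + 1) ≤ 3 ^ m := Nat.pow_le_pow_right (by norm_num) hlm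
    rw [pow_succ] at h₁ h₂
    omega

lemma three_pow_add_add_three_pow_add_ne (k m l : ℕ) : 3 ^ m + m + (3 ^ l + l) ≠ 3 ^ k := by
  wlog hml : m ≤ l generalizing m l
  · rw [add_comm]
    exact this l m (by omega)
  have hl := two_mul_three_pow_add_lt l
  have hmono : 3 ^ m ≤ 3 ^ l := Nat.pow_le_pow_right (by norm_num) hml
  have hm₀ : 0 < 3 ^ m := by positivity
  rcases lt_or_ge l k with hlk | hkl
  · have : 3 ^ (l + 1) ≤ 3 ^ k := Nat.pow_le_pow_right (by norm_num) hlk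
    omega
  · have : 3 ^ k ≤ 3 ^ l := Nat.pow_le_pow_right (by norm_num) hkl
    omega

def IsSpike (x : ℤ) : Prop := spikeA x ∨ spikeB x

lemma isSpike_three_pow_add {n : ℕ} (hn : 1 ≤ n) : IsSpike (3 ^ n + n) := Or.inl ⟨n, hn, rfl⟩

lemma isSpike_neg_three_pow {n : ℕ} (hn : 1 ≤ n) : IsSpike (-3 ^ n) := Or.inr ⟨n, hn, rfl⟩

lemma not_isSpike_three_pow_sub {k : ℕ} {j : ℤ} (hj : j.natAbs < k) : ¬IsSpike (3 ^ k - j) := by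
  have hk : 2 * (k : ℤ) < 3 ^ k := by exact_mod_cast two_mul_lt_three_pow k
  rintro (⟨m, -, hm⟩ | ⟨m, -, hm⟩)
  · rcases lt_or_ge m k with hmk | hkm
    · have h₁ : 2 * ((3 : ℤ) ^ m + m) < 3 ^ (m + 1) := by exact_mod_cast two_mul_three_pow_add_lt m
      have h₂ : (3 : ℤ) ^ (m + 1) ≤ 3 ^ k := pow_le_pow_right₀ (by norm_num) hmk
      omega
    · have h₂ : (3 : ℤ) ^ k ≤ 3 ^ m := pow_le_pow_right₀ (by norm_num) hkm
      omega
  · have : (0 : ℤ) < 3 ^ m := by positivity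
    omega

lemma eq_of_isSpike_of_isSpike_three_pow_sub {k : ℕ} (hk : Even k) {j : ℤ} (hj : IsSpike j)
    (hj' : IsSpike (3 ^ k - j)) : j = 3 ^ 3 ^ k + 3 ^ k ∨ j = -3 ^ 3 ^ k := by
  rcases hj with ⟨m, -, rfl⟩ | ⟨m, -, rfl⟩ <;> rcases hj' with ⟨l, -, hl⟩ | ⟨l, -, hl⟩
  · exact absurd (by zify; linarith) (three_pow_add_add_three_pow_add_ne k m l)
  · obtain ⟨rfl, -⟩ := eq_of_three_pow_add_eq hk (by zify; linarith : 3 ^ m + m = 3 ^ k + 3 ^ l)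
    left
    push_cast
    rfl
  · obtain ⟨-, rfl⟩ := eq_of_three_pow_add_eq hk (by zify; linarith : 3 ^ l + l = 3 ^ k + 3 ^ m)
    right
    rfl
  · have : (0 : ℤ) < 3 ^ k + 3 ^ m + 3 ^ l := by positivity
    linarith

def IsFarNonSpike (k : ℕ) (x : ℤ) : Prop := ¬IsSpike x ∧ k ≤ x.natAbs

lemma isFarNonSpike_or_isFarNonSpike_three_pow_sub {k : ℕ} (hk : Even k) {j : ℤ}
    (h₁ : j ≠ 3 ^ 3 ^ k + 3 ^ k) (h₂ : j ≠ -3 ^ 3 ^ k) :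
    IsFarNonSpike k j ∨ IsFarNonSpike k (3 ^ k - j) := by
  by_cases hj : IsSpike j
  · refine Or.inr ⟨fun h => (eq_of_isSpike_of_isSpike_three_pow_sub hk hj h).elim h₁ h₂, ?_⟩
    by_contra! hlt
    exact not_isSpike_three_pow_sub hlt (by rwa [sub_sub_cancel])
  by_cases hjk : k ≤ j.natAbs
  · exact Or.inl ⟨hj, hjk⟩
  · have : 2 * (k : ℤ) < 3 ^ k := by exact_mod_cast two_mul_lt_three_pow k
    exact Or.inr ⟨not_isSpike_three_pow_sub (by omega), by omega⟩

lemma wfun_of_isSpike {x : ℤ} (h : IsSpike x) : wfun x = exp (-(x : ℝ) ^ 2) := if_pos h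

lemma wfun_of_not_isSpike {x : ℤ} (h : ¬IsSpike x) :
    wfun x = exp (-((10 ^ 10 ^ x.natAbs : ℕ) : ℝ)) := by
  rw [wfun, if_neg (show ¬(spikeA x ∨ spikeB x) from h), Nat.cast_pow,
    ← Real.rpow_natCast _ (10 ^ x.natAbs)]
  push_cast
  rfl

lemma wfun_pos (x : ℤ) : 0 < wfun x := by
  unfold wfun
  split <;> exact exp_pos _

lemma wfun_le_exp_neg_sq (x : ℤ) : wfun x ≤ exp (-(x : ℝ) ^ 2) := by
  by_cases h : IsSpike x
  · exact (wfun_of_isSpike h).le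
  · rw [wfun_of_not_isSpike h, exp_le_exp, neg_le_neg_iff]
    calc (x : ℝ) ^ 2 = ((x.natAbs ^ 2 : ℕ) : ℝ) := by
          push_cast [Nat.cast_natAbs]
          exact (sq_abs _).symm
    _ ≤ _ := by exact_mod_cast sq_le_ten_pow_ten_pow _

lemma wfun_le_wfun_mul_wfun_of_isFarNonSpike {k : ℕ} (hk : k ≠ 0) {x : ℤ}
    (hx : IsFarNonSpike k x) : wfun x ≤ wfun (3 ^ 3 ^ k + 3 ^ k) * wfun (-3 ^ 3 ^ k) := by
  have hN : 3 ^ k < 10 ^ x.natAbs :=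
    (Nat.pow_lt_pow_left (by norm_num) hk).trans_le (Nat.pow_le_pow_right (by norm_num) hx.2)
  have hk₁ : 1 ≤ 3 ^ k := Nat.one_le_pow _ _ (by norm_num)
  rw [wfun_of_not_isSpike hx.1, wfun_of_isSpike (by exact_mod_cast isSpike_three_pow_add hk₁),
    wfun_of_isSpike (isSpike_neg_three_pow hk₁), ← exp_add, exp_le_exp, ← neg_add,
    neg_le_neg_iff]
  calc _ = (((3 ^ 3 ^ k + 3 ^ k) ^ 2 + (3 ^ 3 ^ k) ^ 2 : ℕ) : ℝ) := by push_cast; ring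
  _ ≤ _ := by exact_mod_cast three_pow_add_sq_add_sq_le hN

lemma summable_wfun : Summable wfun := by
  refine Summable.of_nonneg_of_le (fun x => (wfun_pos x).le) wfun_le_exp_neg_sq ?_
  simpa using summable_exp_mul_abs_mul_exp_neg_sq 0

lemma Zw_pos : 0 < Zw := summable_wfun.tsum_pos (fun x => (wfun_pos x).le) 0 (wfun_pos 0)

lemma pCtr_pos (x : ℤ) : 0 < pCtr x := div_pos (wfun_pos x) Zw_pos

lemma summable_pCtr : Summable pCtr := summable_wfun.div_const Zw

lemma tsum_pCtr : ∑' x : ℤ, pCtr x = 1 := by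
  simp_rw [pCtr]
  rw [tsum_div_const]
  exact div_self Zw_pos.ne'

lemma summable_pCtr_sub (z : ℤ) : Summable fun j => pCtr (z - j) :=
  (Equiv.subLeft z).summable_iff.mpr summable_pCtr

lemma tsum_pCtr_sub (z : ℤ) : ∑' j, pCtr (z - j) = 1 :=
  ((Equiv.subLeft z).tsum_eq pCtr).trans tsum_pCtr

lemma pCtr_le (x : ℤ) : pCtr x ≤ Zw⁻¹ * exp (-(x : ℝ) ^ 2) := by
  rw [pCtr, div_eq_inv_mul]
  exact mul_le_mul_of_nonneg_left (wfun_le_exp_neg_sq x) (inv_nonneg.2 Zw_pos.le)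

lemma pCtr_le_one (x : ℤ) : pCtr x ≤ 1 :=
  tsum_pCtr ▸ summable_pCtr.le_tsum x fun y _ => (pCtr_pos y).le

lemma summable_exp_mul_pCtr_mul_pCtr_sub (a : ℝ) (z : ℤ) :
    Summable fun j : ℤ => exp (a * |(j : ℝ)|) * pCtr j * pCtr (z - j) := by
  refine ((summable_exp_mul_abs_mul_exp_neg_sq a).mul_left Zw⁻¹).of_nonneg_of_le
    (fun j => mul_nonneg (mul_nonneg (exp_pos _).le (pCtr_pos j).le) (pCtr_pos _).le) fun j => ?_
  have := pCtr_pos j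
  calc exp (a * |(j : ℝ)|) * pCtr j * pCtr (z - j) ≤ exp (a * |(j : ℝ)|) * pCtr j :=
        mul_le_of_le_one_right (by positivity) (pCtr_le_one _)
  _ ≤ exp (a * |(j : ℝ)|) * (Zw⁻¹ * exp (-(j : ℝ) ^ 2)) := by gcongr; exact pCtr_le j
  _ = _ := by ring

lemma summable_pCtr_mul_pCtr_sub (z : ℤ) : Summable fun j : ℤ => pCtr j * pCtr (z - j) := by
  simpa using summable_exp_mul_pCtr_mul_pCtr_sub 0 z

lemma tsum_pCtr_mul_pCtr_sub_pos (z : ℤ) : 0 < ∑' j, pCtr j * pCtr (z - j) :=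
  (summable_pCtr_mul_pCtr_sub z).tsum_pos (fun _ => (mul_pos (pCtr_pos _) (pCtr_pos _)).le) 0
    (mul_pos (pCtr_pos _) (pCtr_pos _))

noncomputable def spikePairMass (k : ℕ) : ℝ := pCtr (3 ^ 3 ^ k + 3 ^ k) * pCtr (-3 ^ 3 ^ k)

lemma spikePairMass_pos (k : ℕ) : 0 < spikePairMass k := mul_pos (pCtr_pos _) (pCtr_pos _)

section SpikePair

variable {k : ℕ}

lemma pCtr_le_of_isFarNonSpike (hk₀ : k ≠ 0) {x : ℤ} (hx : IsFarNonSpike k x) :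
    pCtr x ≤ Zw * spikePairMass k :=
  calc pCtr x ≤ wfun (3 ^ 3 ^ k + 3 ^ k) * wfun (-3 ^ 3 ^ k) / Zw :=
        div_le_div_of_nonneg_right (wfun_le_wfun_mul_wfun_of_isFarNonSpike hk₀ hx) Zw_pos.le
  _ = Zw * spikePairMass k := by
        simp only [spikePairMass, pCtr]
        field_simp

lemma pCtr_mul_pCtr_three_pow_sub_le (hk₀ : k ≠ 0) (hk : Even k) {j : ℤ}
    (h₁ : j ≠ 3 ^ 3 ^ k + 3 ^ k) (h₂ : j ≠ -3 ^ 3 ^ k) :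
    pCtr j * pCtr (3 ^ k - j) ≤ Zw * spikePairMass k * (pCtr j + pCtr (3 ^ k - j)) := by
  have := pCtr_pos j
  have := pCtr_pos (3 ^ k - j)
  rcases isFarNonSpike_or_isFarNonSpike_three_pow_sub hk h₁ h₂ with hj | hj
  · nlinarith [pCtr_le_of_isFarNonSpike hk₀ hj]
  · nlinarith [pCtr_le_of_isFarNonSpike hk₀ hj]

lemma tsum_pCtr_mul_pCtr_three_pow_sub_le (hk₀ : k ≠ 0) (hk : Even k) :
    ∑' j, pCtr j * pCtr (3 ^ k - j) ≤ 2 * (1 + Zw) * spikePairMass k := by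
  have hP : 0 ≤ Zw * spikePairMass k := (mul_pos Zw_pos (spikePairMass_pos k)).le
  have hne : (3 : ℤ) ^ 3 ^ k + 3 ^ k ≠ -3 ^ 3 ^ k := by
    have : (0 : ℤ) < 3 ^ 3 ^ k := by positivity
    have : (0 : ℤ) < 3 ^ k := by positivity
    omega
  calc ∑' j, pCtr j * pCtr (3 ^ k - j)
      ≤ ∑ j ∈ {3 ^ 3 ^ k + 3 ^ k, -3 ^ 3 ^ k}, pCtr j * pCtr (3 ^ k - j) +
          ∑' j, Zw * spikePairMass k * (pCtr j + pCtr (3 ^ k - j)) := by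
        refine (summable_pCtr_mul_pCtr_sub _).tsum_le_sum_add_tsum _
          ((summable_pCtr.add (summable_pCtr_sub _)).mul_left _) (fun j => ?_) fun j hj => ?_
        · exact mul_nonneg hP (add_pos (pCtr_pos _) (pCtr_pos _)).le
        · simp only [Finset.mem_insert, Finset.mem_singleton, not_or] at hj
          exact pCtr_mul_pCtr_three_pow_sub_le hk₀ hk hj.1 hj.2
  _ = 2 * (1 + Zw) * spikePairMass k := by
        rw [Finset.sum_pair hne, tsum_mul_left, summable_pCtr.tsum_add (summable_pCtr_sub _),
          tsum_pCtr, tsum_pCtr_sub, show (3 : ℤ) ^ k - (3 ^ 3 ^ k + 3 ^ k) = -3 ^ 3 ^ k by ring,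
          show (3 : ℤ) ^ k - -3 ^ 3 ^ k = 3 ^ 3 ^ k + 3 ^ k by ring, spikePairMass]
        ring

lemma exp_mul_spikePairMass_le_tsum {a : ℝ} (ha : 0 ≤ a) :
    exp (a * 3 ^ 3 ^ k) * spikePairMass k ≤
      ∑' j : ℤ, exp (a * |(j : ℝ)|) * pCtr j * pCtr (3 ^ k - j) := by
  have hc : (3 : ℝ) ^ 3 ^ k ≤ |((3 ^ 3 ^ k + 3 ^ k : ℤ) : ℝ)| := by
    push_cast
    rw [abs_of_pos (by positivity)]
    exact le_add_of_nonneg_right (by positivity)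
  calc exp (a * 3 ^ 3 ^ k) * spikePairMass k
      ≤ exp (a * |((3 ^ 3 ^ k + 3 ^ k : ℤ) : ℝ)|) * pCtr (3 ^ 3 ^ k + 3 ^ k) *
          pCtr (3 ^ k - (3 ^ 3 ^ k + 3 ^ k)) := by
        rw [show (3 : ℤ) ^ k - (3 ^ 3 ^ k + 3 ^ k) = -3 ^ 3 ^ k by ring, mul_assoc,
          ← spikePairMass]
        gcongr
        exact (spikePairMass_pos k).le
  _ ≤ _ := (summable_exp_mul_pCtr_mul_pCtr_sub a _).le_tsum _ fun j _ =>
        mul_nonneg (mul_nonneg (exp_pos _).le (pCtr_pos j).le) (pCtr_pos _).le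

end SpikePair

lemma exists_even_add_mul_sq_le {a : ℝ} (ha : 0 < a) (c L : ℝ) :
    ∃ k : ℕ, k ≠ 0 ∧ Even k ∧ L + c * ((3 : ℝ) ^ k) ^ 2 ≤ a * 3 ^ 3 ^ k := by
  obtain ⟨K, hK⟩ := exists_nat_ge ((c + max L 0) / a)
  refine ⟨2 * K + 2, by omega, ⟨K + 1, by ring⟩, ?_⟩
  set k := 2 * K + 2
  have hak : c + max L 0 ≤ a * k := by
    rw [div_le_iff₀ ha] at hK
    have : (K : ℝ) ≤ k := by simp only [k]; push_cast; linarith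
    nlinarith
  have hgrowth : (k : ℝ) * ((3 : ℝ) ^ k) ^ 2 ≤ 3 ^ 3 ^ k := by
    exact_mod_cast nine_pow k ▸ mul_nine_pow_le k
  have hq : 1 ≤ ((3 : ℝ) ^ k) ^ 2 := one_le_pow₀ (one_le_pow₀ (by norm_num))
  calc L + c * ((3 : ℝ) ^ k) ^ 2 ≤ (c + max L 0) * ((3 : ℝ) ^ k) ^ 2 := by
        nlinarith [le_max_left L 0, le_max_right L 0]
  _ ≤ a * k * ((3 : ℝ) ^ k) ^ 2 := by gcongr
  _ ≤ a * 3 ^ 3 ^ k := by rw [mul_assoc]; gcongr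

/-- **Section 7.2 (counterexample).** The distribution `p_X = w/Z` is a probability mass
function on `ℤ`, positive everywhere and bounded by `Z⁻¹ e^{−x²}` (so it satisfies
Assumptions D1–D4), yet for every `a, c, C > 0` there is an endpoint `z ∈ ℤ` with
`P(X₁ + X₂ = z) > 0` and `E[e^{a|X₁|} | X₁ + X₂ = z] ≥ C e^{c z²}`; hence no KMT-type
coupling bound uniform in the endpoint can hold for the corresponding random walk bridges. -/
theorem section_7_2_counterexample :
    Summable wfun ∧
    (∀ x : ℤ, 0 < pCtr x) ∧
    (∑' x : ℤ, pCtr x) = 1 ∧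
    (∀ x : ℤ, pCtr x ≤ Zw⁻¹ * Real.exp (-(x : ℝ) ^ 2)) ∧
    (∀ a c C : ℝ, 0 < a → 0 < c → 0 < C →
      ∃ z : ℤ,
        0 < (∑' k : ℤ, pCtr k * pCtr (z - k)) ∧
        C * Real.exp (c * (z : ℝ) ^ 2) ≤
          (∑' k : ℤ, Real.exp (a * |(k : ℝ)|) * pCtr k * pCtr (z - k)) /
            (∑' k : ℤ, pCtr k * pCtr (z - k))) := by
  refine ⟨summable_wfun, pCtr_pos, tsum_pCtr, pCtr_le, fun a c C ha _ hC => ?_⟩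
  obtain ⟨k, hk₀, hk, hgrowth⟩ := exists_even_add_mul_sq_le ha c (log (2 * (1 + Zw) * C))
  have hK : 0 < 2 * (1 + Zw) * C := by have := Zw_pos; positivity
  have hP := spikePairMass_pos k
  refine ⟨3 ^ k, tsum_pCtr_mul_pCtr_sub_pos _, ?_⟩
  rw [le_div_iff₀ (tsum_pCtr_mul_pCtr_sub_pos _)]
  calc C * exp (c * ((3 ^ k : ℤ) : ℝ) ^ 2) * ∑' j, pCtr j * pCtr (3 ^ k - j)
      ≤ C * exp (c * ((3 ^ k : ℤ) : ℝ) ^ 2) * (2 * (1 + Zw) * spikePairMass k) := by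
        gcongr
        exact tsum_pCtr_mul_pCtr_three_pow_sub_le hk₀ hk
  _ = exp (log (2 * (1 + Zw) * C) + c * ((3 : ℝ) ^ k) ^ 2) * spikePairMass k := by
        rw [exp_add, exp_log hK]
        push_cast
        ring
  _ ≤ exp (a * 3 ^ 3 ^ k) * spikePairMass k := by gcongr
  _ ≤ _ := exp_mul_spikePairMass_le_tsum ha.le
end

section
/- (Inequality (8.22) from the proof of Lemma 8.2) For every real a > 0 and every y ∈ ℝ, the complex Gamma function satisfies |Γ(a + i·y)| ≤ Γ(a) · a / √(a² + y²). -/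
/-!
Since `|t ^ (z - 1)| = t ^ (Re z - 1)` for `t > 0`, the Euler integral gives `|Γ(z)| ≤ Γ(Re z)`.
Applying this at `z + 1` and using `Γ(z + 1) = z Γ(z)` and `Γ(a + 1) = a Γ(a)` gains the factor
`Re z / |z|`.
-/

open MeasureTheory Set

namespace Complex

lemma norm_Gamma_le_Gamma_re {z : ℂ} (hz : 0 < z.re) : ‖Gamma z‖ ≤ Real.Gamma z.re := by
  rw [Gamma_eq_integral hz, Real.Gamma_eq_integral hz, GammaIntegral]
  calc ‖∫ t in Ioi (0 : ℝ), (Real.exp (-t) : ℂ) * (t : ℂ) ^ (z - 1)‖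
      ≤ ∫ t in Ioi (0 : ℝ), ‖(Real.exp (-t) : ℂ) * (t : ℂ) ^ (z - 1)‖ :=
        norm_integral_le_integral_norm _
    _ = ∫ t in Ioi (0 : ℝ), Real.exp (-t) * t ^ (z.re - 1) := by
        refine setIntegral_congr_fun measurableSet_Ioi fun t ht => ?_
        rw [norm_mul, norm_real, Real.norm_of_nonneg (Real.exp_nonneg _),
          norm_cpow_eq_rpow_re_of_pos ht, sub_re, one_re]

lemma norm_Gamma_le_Gamma_re_mul_re_div_norm {z : ℂ} (hz : 0 < z.re) :
    ‖Gamma z‖ ≤ Real.Gamma z.re * z.re / ‖z‖ := by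
  have hz0 : z ≠ 0 := fun h => hz.ne' (by simp [h])
  have hz1 : 0 < (z + 1).re := by simp only [add_re, one_re]; linarith
  have key : ‖z‖ * ‖Gamma z‖ ≤ Real.Gamma z.re * z.re := by
    calc ‖z‖ * ‖Gamma z‖ = ‖Gamma (z + 1)‖ := by rw [Gamma_add_one z hz0, norm_mul]
      _ ≤ Real.Gamma (z.re + 1) := by simpa using norm_Gamma_le_Gamma_re hz1
      _ = Real.Gamma z.re * z.re := by rw [Real.Gamma_add_one hz.ne', mul_comm]
  rw [le_div_iff₀ (norm_pos_iff.mpr hz0), mul_comm]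
  exact key

end Complex

/-- **Inequality (8.22).** For every `a > 0` and `y ∈ ℝ`, the complex Gamma function satisfies
`|Γ(a + iy)| ≤ Γ(a) · a / √(a² + y²)`. -/
theorem gamma_vertical_decay (a y : ℝ) (ha : 0 < a) :
    ‖Complex.Gamma (a + y * Complex.I)‖ ≤
      Real.Gamma a * a / Real.sqrt (a ^ 2 + y ^ 2) := by
  have hre : (a + y * Complex.I).re = a := by simp
  have h := Complex.norm_Gamma_le_Gamma_re_mul_re_div_norm (hre ▸ ha)
  rwa [hre, Complex.norm_add_mul_I] at h
end

section
/- (Lemma 8.3) For γ > 0 let m_γ = ψ⁽⁰⁾(γ) (the digamma function, i.e. the derivative of log Γ at γ) and σ_γ = √(ψ⁽¹⁾(γ)) (the square root of the trigamma function, i.e. of the second derivative of log Γ at γ), and define f_γ(x) = (σ_γ / Γ(γ)) · exp( γ·(σ_γ·x + m_γ) − e^{σ_γ·x + m_γ} ) for x ∈ ℝ (the density of the centered and normalized log-gamma variable (ξ − m_γ)/σ_γ, where ξ has density exp(γ·u − e^u)/Γ(γ)). Then for every γ₀ > 0 there exist constants L, D, d > 0 such that for all γ ≥ γ₀: f_γ(x)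 ≤ L for all x ∈ ℝ, and f_γ(x) ≤ D·e^{−d·x²} for all x ≥ 0. -/
open MeasureTheory Real Set Filter
open scoped ENNReal NNReal

noncomputable section

/-- The digamma function `ψ⁰(γ) = (log Γ)'(γ)`. -/
def digamma (γ : ℝ) : ℝ := deriv (fun x => Real.log (Real.Gamma x)) γ

/-- The trigamma function `ψ¹(γ) = (log Γ)''(γ)`. -/
def trigamma (γ : ℝ) : ℝ := deriv (deriv (fun x => Real.log (Real.Gamma x))) γ

/-- The density of the centered and normalized log-gamma variable `(ξ − m_γ)/σ_γ`,
where `ξ` has density `exp(γu − e^u)/Γ(γ)`, `m_γ = ψ⁰(γ)` and `σ_γ = √ψ¹(γ)`: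
`f_γ(x) = (σ_γ/Γ(γ)) exp(γ(σ_γ x + m_γ) − e^{σ_γ x + m_γ})`. -/
def logGammaDensity (γ : ℝ) (x : ℝ) : ℝ :=
  (Real.sqrt (trigamma γ) / Real.Gamma γ) *
    Real.exp (γ * (Real.sqrt (trigamma γ) * x + digamma γ) -
      Real.exp (Real.sqrt (trigamma γ) * x + digamma γ))

end

/-!
With `u = σ_γ x + ψ⁰(γ)` and `v = u - log γ` one has
`γ u - e^u = γ log γ - γ - γ (e^v - 1 - v)`, so `f_γ(x) = P(γ) exp(-γ (e^v - 1 - v))`, where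
`P(γ) = σ_γ γ^γ e^{-γ} / Γ(γ)` is the value at the mode.

Bounding the Gamma integrand from below on `[γ, γ + √γ]` gives `γ^γ e^{-γ} ≤ e (√γ + 1) Γ(γ)`;
together with `ψ¹(γ) ≤ 1/γ + 1/γ²` this yields `P(γ) ≤ 2e (1 + 1/γ)`, which is `L`.

For `x ≥ 0` the Gaussian tail comes from `e^v - 1 - v ≥ max(v, 0)² / 2`, from `γ ψ¹(γ) ≥ 1`,
and from `0 ≤ log γ - ψ⁰(γ) ≤ 1/γ`; the latter follows from the convexity of `log Γ` and
`ψ⁰(γ + 1) = ψ⁰(γ) + 1/γ`. The bounds on `ψ¹` come from `ψ¹(x) = ∑ (x + k)⁻²`, obtained by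
differentiating termwise `ψ⁰(x) = -γ_E + ∑ ((k + 1)⁻¹ - (x + k)⁻¹)`, which is the locally
uniform limit of the derivatives of Gauss's approximations `logGammaSeq x n → log Γ(x)`.
-/

open scoped Topology
open Finset (range)

section Trigamma

variable {x y : ℝ}

lemma inv_sub_inv_add_one_le (hy : 0 < y) : y⁻¹ - (y + 1)⁻¹ ≤ (y ^ 2)⁻¹ := by
  rw [inv_sub_inv hy.ne' (by positivity), add_sub_cancel_left, one_div]
  gcongr
  nlinarith

lemma inv_add_one_sq_le (hy : 0 < y) : ((y + 1) ^ 2)⁻¹ ≤ y⁻¹ - (y + 1)⁻¹ := by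
  rw [inv_sub_inv hy.ne' (by positivity), add_sub_cancel_left, one_div]
  gcongr
  nlinarith

lemma hasSum_inv_sub_inv (hx : 0 < x) :
    HasSum (fun k : ℕ => (x + k)⁻¹ - (x + k + 1)⁻¹) x⁻¹ := by
  have hterm (k : ℕ) : 0 ≤ (x + k)⁻¹ - (x + k + 1)⁻¹ :=
    sub_nonneg.2 (inv_anti₀ (by positivity) (by linarith))
  rw [hasSum_iff_tendsto_nat_of_nonneg hterm]
  have h := (tendsto_inv_atTop_zero.comp
    (tendsto_atTop_add_const_left _ x tendsto_natCast_atTop_atTop)).const_sub x⁻¹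
  rw [sub_zero] at h
  refine h.congr fun n => ?_
  simpa [add_assoc] using (Finset.sum_range_sub' (fun k : ℕ => (x + k)⁻¹) n).symm

lemma summable_inv_add_sq (hx : 0 < x) : Summable (fun k : ℕ => ((x + k) ^ 2)⁻¹) := by
  refine (summable_nat_add_iff 1).1 ((hasSum_inv_sub_inv hx).summable.of_nonneg_of_le
    (fun k => by positivity) fun k => ?_)
  simpa [add_assoc] using inv_add_one_sq_le (by positivity : 0 < x + k)

noncomputable def trigammaSeries (x : ℝ) : ℝ := ∑' k : ℕ, ((x + k) ^ 2)⁻¹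

lemma inv_le_trigammaSeries (hx : 0 < x) : x⁻¹ ≤ trigammaSeries x :=
  hasSum_le (fun k => inv_sub_inv_add_one_le (by positivity)) (hasSum_inv_sub_inv hx)
    (summable_inv_add_sq hx).hasSum

lemma trigammaSeries_le (hx : 0 < x) : trigammaSeries x ≤ x⁻¹ + (x ^ 2)⁻¹ := by
  rw [trigammaSeries, (summable_inv_add_sq hx).tsum_eq_zero_add, add_comm]
  gcongr
  · refine hasSum_le (fun k => ?_) ((summable_nat_add_iff 1).2 (summable_inv_add_sq hx)).hasSum
      (hasSum_inv_sub_inv hx)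
    simpa [add_assoc] using inv_add_one_sq_le (by positivity : 0 < x + k)
  · simp

end Trigamma

section Digamma

variable {a b x : ℝ}

noncomputable def digammaTerm (k : ℕ) (x : ℝ) : ℝ := ((k : ℝ) + 1)⁻¹ - (x + k)⁻¹

noncomputable def digammaSeries (x : ℝ) : ℝ := -eulerMascheroniConstant + ∑' k, digammaTerm k x

noncomputable def digammaSeq (n : ℕ) (x : ℝ) : ℝ := log n - ∑ m ∈ range (n + 1), (x + m)⁻¹

lemma abs_digammaTerm_le (ha : 0 < a) (hx : x ∈ Ioo a b) (k : ℕ) :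
    |digammaTerm k x| ≤ (b + 1) / min a 1 * ((1 + k : ℝ) ^ 2)⁻¹ := by
  obtain ⟨hax, hxb⟩ := hx
  have hc : 0 < min a 1 := lt_min ha one_pos
  have hk : (0 : ℝ) < k + 1 := by positivity
  have hxk : min a 1 * (k + 1) ≤ x + k := by
    nlinarith [min_le_left a 1, min_le_right a 1, (Nat.cast_nonneg k : (0 : ℝ) ≤ k)]
  have hxk' : 0 < x + k := by linarith [mul_pos hc hk]
  have hterm : digammaTerm k x = (x - 1) / ((k + 1) * (x + k)) := by
    rw [digammaTerm, inv_sub_inv hk.ne' hxk'.ne', div_eq_mul_inv]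
    ring
  rw [hterm, abs_div, abs_of_pos (mul_pos hk hxk'), ← div_eq_mul_inv, div_div,
    add_comm 1 (k : ℝ)]
  apply div_le_div₀ (by linarith) (abs_le.2 ⟨by linarith, by linarith⟩) (by positivity)
  nlinarith

lemma summable_digammaTerm (hx : 0 < x) : Summable (digammaTerm · x) :=
  .of_norm_bounded ((summable_inv_add_sq one_pos).mul_left _) fun k =>
    abs_digammaTerm_le (b := x + 1) (half_pos hx) ⟨by linarith, by linarith⟩ k

lemma digammaSeq_eq (n : ℕ) (x : ℝ) :
    digammaSeq n x = (log n - harmonic (n + 1)) + ∑ m ∈ range (n + 1), digammaTerm m x := by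
  simp [digammaSeq, digammaTerm, harmonic, Finset.sum_sub_distrib]

lemma tendsto_log_sub_harmonic_succ :
    Tendsto (fun n : ℕ => log n - harmonic (n + 1)) atTop (𝓝 (-eulerMascheroniConstant)) := by
  have h := tendsto_harmonic_sub_log.neg.sub tendsto_one_div_add_atTop_nhds_zero_nat
  rw [sub_zero] at h
  refine h.congr fun n => ?_
  push_cast [harmonic_succ]
  ring

lemma tendstoUniformlyOn_digammaSeq (ha : 0 < a) :
    TendstoUniformlyOn digammaSeq digammaSeries atTop (Ioo a b) := by
  have hsum := tendstoUniformlyOn_tsum_nat (f := digammaTerm)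
    ((summable_inv_add_sq one_pos).mul_left _)
    fun k x hx => (abs_digammaTerm_le (b := b) ha hx k).trans_eq' (Real.norm_eq_abs _)
  have hsum' : TendstoUniformlyOn (fun n x => ∑ m ∈ range (n + 1), digammaTerm m x)
      (fun x => ∑' k, digammaTerm k x) atTop (Ioo a b) :=
    fun u hu => (tendsto_add_atTop_nat 1).eventually (hsum u hu)
  have := (tendsto_log_sub_harmonic_succ.tendstoUniformlyOn_const (Ioo a b)).add hsum'
  convert this using 1
  · exact funext₂ digammaSeq_eq
  · rfl

end Digamma

section Derivatives

open Real.BohrMollerup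

variable {x : ℝ}

lemma hasDerivAt_logGammaSeq (n : ℕ) (hx : 0 < x) :
    HasDerivAt (logGammaSeq · n) (digammaSeq n x) x := by
  have hlog : HasDerivAt (fun y => ∑ m ∈ range (n + 1), log (y + m))
      (∑ m ∈ range (n + 1), (x + m)⁻¹) x :=
    .fun_sum fun m _ => by
      simpa using ((hasDerivAt_id x).add_const (m : ℝ)).log (by positivity)
  exact ((hasDerivAt_mul_const (log n)).add_const _).sub hlog

lemma hasDerivAt_log_Gamma (hx : 0 < x) :
    HasDerivAt (fun y => log (Gamma y)) (digammaSeries x) x :=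
  hasDerivAt_of_tendstoUniformlyOn isOpen_Ioo (tendstoUniformlyOn_digammaSeq (half_pos hx))
    (.of_forall fun n _ hy => hasDerivAt_logGammaSeq n ((half_pos hx).trans hy.1))
    (fun _ hy => tendsto_log_gamma ((half_pos hx).trans hy.1))
    (⟨half_lt_self hx, lt_add_one x⟩ : x ∈ Ioo (x / 2) (x + 1))

lemma digamma_eq_digammaSeries (hx : 0 < x) : digamma x = digammaSeries x :=
  (hasDerivAt_log_Gamma hx).deriv

lemma hasDerivAt_digammaSeries (hx : 0 < x) :
    HasDerivAt digammaSeries (trigammaSeries x) x := by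
  have hterm (k : ℕ) (y : ℝ) (hy : y ∈ Ioi (x / 2)) :
      HasDerivAt (digammaTerm k) ((y + k) ^ 2)⁻¹ y := by
    have hyk : y + k ≠ 0 := by have : (0 : ℝ) < y := (half_pos hx).trans hy; positivity
    exact ((((hasDerivAt_id' y).add_const (k : ℝ)).inv hyk).const_sub
      ((k : ℝ) + 1)⁻¹).congr_deriv (by rw [neg_div, neg_neg, one_div])
  have hbound (k : ℕ) (y : ℝ) (hy : y ∈ Ioi (x / 2)) :
      ‖((y + k) ^ 2)⁻¹‖ ≤ ((x / 2 + k) ^ 2)⁻¹ := by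
    have : (0 : ℝ) < x / 2 + k := by positivity
    rw [norm_inv, norm_pow, Real.norm_of_nonneg (by linarith [mem_Ioi.1 hy])]
    gcongr
    exact le_of_lt hy
  exact (hasDerivAt_tsum_of_isPreconnected (summable_inv_add_sq (half_pos hx)) isOpen_Ioi
    isPreconnected_Ioi hterm hbound (mem_Ioi.2 (half_lt_self hx)) (summable_digammaTerm hx)
    (mem_Ioi.2 (half_lt_self hx))).const_add _

lemma trigamma_eq_trigammaSeries (hx : 0 < x) : trigamma x = trigammaSeries x := by
  have h : digamma =ᶠ[𝓝 x] digammaSeries :=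
    eventually_of_mem (Ioi_mem_nhds hx) fun y hy => digamma_eq_digammaSeries hy
  exact h.deriv_eq.trans (hasDerivAt_digammaSeries hx).deriv

end Derivatives

section DigammaBounds

variable {x : ℝ}

lemma log_Gamma_add_one (hx : 0 < x) : log (Gamma (x + 1)) = log (Gamma x) + log x := by
  rw [Gamma_add_one hx.ne', log_mul hx.ne' (Gamma_pos_of_pos hx).ne', add_comm]

lemma digamma_add_one (hx : 0 < x) : digamma (x + 1) = digamma x + x⁻¹ := by
  have hshift := (hasDerivAt_log_Gamma (by linarith : 0 < x + 1)).comp_add_const x 1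
  have hfeq : (fun y => log (Gamma (y + 1))) =ᶠ[𝓝 x] fun y => log (Gamma y) + log y :=
    eventually_of_mem (Ioi_mem_nhds hx) fun y hy => log_Gamma_add_one hy
  rw [digamma_eq_digammaSeries (by linarith), digamma_eq_digammaSeries hx]
  exact hshift.unique
    (((hasDerivAt_log_Gamma hx).add (hasDerivAt_log hx.ne')).congr_of_eventuallyEq hfeq)

lemma slope_log_Gamma (hx : 0 < x) : slope (log ∘ Gamma) x (x + 1) = log x := by
  simp [slope_def_field, log_Gamma_add_one hx]

lemma digamma_le_log (hx : 0 < x) : digamma x ≤ log x :=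
  slope_log_Gamma hx ▸ convexOn_log_Gamma.deriv_le_slope hx (by simp; linarith) (lt_add_one x)
    (hasDerivAt_log_Gamma hx).differentiableAt

lemma log_sub_inv_le_digamma (hx : 0 < x) : log x - x⁻¹ ≤ digamma x := by
  have h := convexOn_log_Gamma.slope_le_deriv hx (by simp; linarith) (lt_add_one x)
    (hasDerivAt_log_Gamma (by linarith : 0 < x + 1)).differentiableAt
  rw [slope_log_Gamma hx] at h
  have : deriv (log ∘ Gamma) (x + 1) = digamma x + x⁻¹ := digamma_add_one hx
  linarith

end DigammaBounds

section GammaLowerBound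

variable {γ t : ℝ}

lemma rpow_self_mul_exp_le (hγ : 0 < γ) (hγt : γ ≤ t) (ht : (t - γ) ^ 2 ≤ t) :
    γ ^ γ * exp (-γ - 1) ≤ t ^ γ * exp (-t) := by
  have htpos : 0 < t := hγ.trans_le hγt
  rw [rpow_def_of_pos hγ, rpow_def_of_pos htpos, ← exp_add, ← exp_add, exp_le_exp]
  have hlog := one_sub_inv_le_log_of_pos (div_pos htpos hγ)
  rw [inv_div, log_div htpos.ne' hγ.ne'] at hlog
  have hsq : γ * (γ / t) ≤ 2 * γ - t + 1 := by
    rw [← mul_div_assoc, div_le_iff₀ htpos]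
    nlinarith
  nlinarith [mul_le_mul_of_nonneg_left hlog hγ.le]

lemma rpow_self_mul_exp_neg_le_Gamma (hγ : 0 < γ) :
    γ ^ γ * exp (-γ) ≤ exp 1 * (√γ + 1) * Gamma γ := by
  have hr : 0 < √γ := sqrt_pos.2 hγ
  have hrr : √γ ^ 2 = γ := sq_sqrt hγ.le
  set A := γ ^ γ * exp (-γ - 1)
  have hint := GammaIntegral_convergent hγ
  have hsub : Icc γ (γ + √γ) ⊆ Ioi 0 := fun t ht => hγ.trans_le ht.1
  have hlow : ∀ t ∈ Icc γ (γ + √γ), A / (γ + √γ) ≤ exp (-t) * t ^ (γ - 1) := by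
    rintro t ⟨h1, h2⟩
    have htpos : 0 < t := hγ.trans_le h1
    rw [rpow_sub_one htpos.ne', mul_div_assoc', mul_comm (exp _)]
    refine div_le_div₀ (by positivity) (rpow_self_mul_exp_le hγ h1 ?_) htpos h2
    nlinarith
  have hmass : A / (γ + √γ) * √γ ≤ Gamma γ := by
    calc A / (γ + √γ) * √γ
        = A / (γ + √γ) * volume.real (Icc γ (γ + √γ)) := by
          rw [volume_real_Icc_of_le (by linarith), add_sub_cancel_left]
      _ ≤ ∫ t in Icc γ (γ + √γ), exp (-t) * t ^ (γ - 1) :=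
          setIntegral_ge_of_const_le_real measurableSet_Icc measure_Icc_lt_top.ne hlow
            (hint.mono_set hsub)
      _ ≤ ∫ t in Ioi 0, exp (-t) * t ^ (γ - 1) :=
          setIntegral_mono_set hint
            (ae_restrict_of_forall_mem measurableSet_Ioi fun t ht =>
              mul_nonneg (exp_pos _).le (rpow_nonneg (le_of_lt ht) _))
            hsub.eventuallyLE
      _ = Gamma γ := (Gamma_eq_integral hγ).symm
  have hA : γ ^ γ * exp (-γ) = exp 1 * (√γ + 1) * (A / (γ + √γ) * √γ) := by
    rw [show γ + √γ = √γ * (√γ + 1) by nlinarith]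
    field_simp
    simp only [A]
    rw [mul_left_comm, ← exp_add]
    ring_nf
  rw [hA]
  gcongr

end GammaLowerBound

section Density

variable {γ : ℝ}

-- `e^v - 1 - v ≥ max(v, 0)² / 2`, and `max(s - δ, 0)² ≥ s² / 2 - δ²` when `s ≥ 0`.
lemma sq_div_four_sub_le_exp_sub_one_sub {s : ℝ} (hs : 0 ≤ s) (δ : ℝ) :
    s ^ 2 / 4 - δ ^ 2 / 2 ≤ exp (s - δ) - 1 - (s - δ) := by
  rcases le_total δ s with hδs | hsδ
  · nlinarith [quadratic_le_exp_of_nonneg (sub_nonneg.2 hδs), sq_nonneg (s - 2 * δ)]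
  · nlinarith [add_one_le_exp (s - δ)]

lemma sqrt_trigamma_mul_le (hγ : 0 < γ) : √(trigamma γ) * (√γ + 1) ≤ 2 * (1 + γ⁻¹) := by
  rw [trigamma_eq_trigammaSeries hγ]
  have hT : 0 ≤ trigammaSeries γ := (inv_pos.2 hγ).le.trans (inv_le_trigammaSeries hγ)
  have hsq : (√γ + 1) ^ 2 ≤ 2 * (γ + 1) := by nlinarith [sq_sqrt hγ.le, sq_nonneg (√γ - 1)]
  have hprod : trigammaSeries γ * (√γ + 1) ^ 2 ≤ (2 * (1 + γ⁻¹)) ^ 2 :=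
    calc trigammaSeries γ * (√γ + 1) ^ 2
        ≤ (γ⁻¹ + (γ ^ 2)⁻¹) * (2 * (γ + 1)) :=
          mul_le_mul (trigammaSeries_le hγ) hsq (by positivity) (by positivity)
      _ = 2 * (1 + γ⁻¹) ^ 2 := by field_simp
      _ ≤ (2 * (1 + γ⁻¹)) ^ 2 := by nlinarith [sq_nonneg (1 + γ⁻¹)]
  calc √(trigammaSeries γ) * (√γ + 1) = √(trigammaSeries γ * (√γ + 1) ^ 2) := by
        rw [sqrt_mul hT, sqrt_sq (by positivity)]
    _ ≤ 2 * (1 + γ⁻¹) := (sqrt_le_sqrt hprod).trans_eq (sqrt_sq (by positivity))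

noncomputable def logGammaPeak (γ : ℝ) : ℝ := √(trigamma γ) / Gamma γ * exp (γ * log γ - γ)

noncomputable def logGammaOffset (γ x : ℝ) : ℝ := √(trigamma γ) * x + digamma γ - log γ

lemma logGammaPeak_nonneg (hγ : 0 < γ) : 0 ≤ logGammaPeak γ :=
  mul_nonneg (div_nonneg (sqrt_nonneg _) (Gamma_pos_of_pos hγ).le) (exp_pos _).le

lemma logGammaPeak_le (hγ : 0 < γ) : logGammaPeak γ ≤ 2 * exp 1 * (1 + γ⁻¹) := by
  have hΓ := Gamma_pos_of_pos hγ
  have hpow : exp (γ * log γ - γ) = γ ^ γ * exp (-γ) := by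
    rw [rpow_def_of_pos hγ, ← exp_add, mul_comm, sub_eq_add_neg]
  calc logGammaPeak γ ≤ √(trigamma γ) / Gamma γ * (exp 1 * (√γ + 1) * Gamma γ) := by
        rw [logGammaPeak, hpow]
        exact mul_le_mul_of_nonneg_left (rpow_self_mul_exp_neg_le_Gamma hγ)
          (div_nonneg (sqrt_nonneg _) hΓ.le)
    _ = exp 1 * (√(trigamma γ) * (√γ + 1)) := by field_simp
    _ ≤ exp 1 * (2 * (1 + γ⁻¹)) :=
        mul_le_mul_of_nonneg_left (sqrt_trigamma_mul_le hγ) (exp_pos 1).le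
    _ = 2 * exp 1 * (1 + γ⁻¹) := by ring

lemma mul_sub_exp_eq (hγ : 0 < γ) (u : ℝ) :
    γ * u - exp u = γ * log γ - γ - γ * (exp (u - log γ) - 1 - (u - log γ)) := by
  rw [exp_sub, exp_log hγ]
  field_simp
  ring

lemma logGammaDensity_eq (hγ : 0 < γ) (x : ℝ) :
    logGammaDensity γ x =
      logGammaPeak γ * exp (-(γ * (exp (logGammaOffset γ x) - 1 - logGammaOffset γ x))) := by
  rw [logGammaOffset, logGammaDensity, mul_sub_exp_eq hγ, sub_eq_add_neg _ (γ * _), exp_add,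
    logGammaPeak, mul_assoc]

lemma sq_div_four_sub_le_mul_exp_sub_one_sub (hγ : 0 < γ) {x : ℝ} (hx : 0 ≤ x) :
    x ^ 2 / 4 - (2 * γ)⁻¹ ≤ γ * (exp (logGammaOffset γ x) - 1 - logGammaOffset γ x) := by
  rw [logGammaOffset]
  set σ := √(trigamma γ)
  set δ := log γ - digamma γ
  have hT : γ⁻¹ ≤ trigamma γ := trigamma_eq_trigammaSeries hγ ▸ inv_le_trigammaSeries hγ
  have hσ : 1 ≤ γ * σ ^ 2 := by
    rw [sq_sqrt ((inv_pos.2 hγ).le.trans hT), ← mul_inv_cancel₀ hγ.ne']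
    gcongr
  have hδ0 : 0 ≤ δ := sub_nonneg.2 (digamma_le_log hγ)
  have hδ1 : δ ≤ γ⁻¹ := by linarith [log_sub_inv_le_digamma hγ]
  have hγδ : γ * δ ≤ 1 := by
    rw [← mul_inv_cancel₀ hγ.ne']
    gcongr
  have hδsq : γ * δ ^ 2 ≤ γ⁻¹ := by nlinarith
  have key := mul_le_mul_of_nonneg_left
    (sq_div_four_sub_le_exp_sub_one_sub (mul_nonneg (sqrt_nonneg (trigamma γ)) hx) δ) hγ.le
  rw [show σ * x - δ = σ * x + digamma γ - log γ by ring] at key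
  have hinv : (2 * γ)⁻¹ = γ⁻¹ / 2 := by ring
  nlinarith [mul_le_mul_of_nonneg_right hσ (sq_nonneg x)]

end Density

/-- **Lemma 8.3.** For every `γ₀ > 0` there exist constants `L, D, d > 0` such that for all
`γ ≥ γ₀`, the standardized log-gamma density satisfies `f_γ(x) ≤ L` for all `x` and
`f_γ(x) ≤ D e^{−d x²}` for all `x ≥ 0`. -/
theorem lemma_8_3 (γ₀ : ℝ) (hγ₀ : 0 < γ₀) :
    ∃ L D d : ℝ, 0 < L ∧ 0 < D ∧ 0 < d ∧
      ∀ γ : ℝ, γ₀ ≤ γ →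
        (∀ x : ℝ, logGammaDensity γ x ≤ L) ∧
        (∀ x : ℝ, 0 ≤ x → logGammaDensity γ x ≤ D * Real.exp (-d * x ^ 2)) := by
  refine ⟨2 * exp 1 * (1 + γ₀⁻¹), 2 * exp 1 * (1 + γ₀⁻¹) * exp (2 * γ₀)⁻¹, 1 / 4,
    by positivity, by positivity, by norm_num, fun γ hγ => ?_⟩
  have hγpos : 0 < γ := hγ₀.trans_le hγ
  have hpeak : logGammaPeak γ ≤ 2 * exp 1 * (1 + γ₀⁻¹) :=
    (logGammaPeak_le hγpos).trans (by gcongr)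
  refine ⟨fun x => ?_, fun x hx => ?_⟩
  · set v := logGammaOffset γ x
    have hexp : exp (-(γ * (exp v - 1 - v))) ≤ 1 :=
      exp_le_one_iff.2 (neg_nonpos.2 (mul_nonneg hγpos.le (by linarith [add_one_le_exp v])))
    rw [logGammaDensity_eq hγpos]
    exact (mul_le_of_le_one_right (logGammaPeak_nonneg hγpos) hexp).trans hpeak
  · have hexp := sq_div_four_sub_le_mul_exp_sub_one_sub hγpos hx
    have hinv : (2 * γ)⁻¹ ≤ (2 * γ₀)⁻¹ := by gcongr
    rw [logGammaDensity_eq hγpos, mul_assoc, ← exp_add]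
    exact mul_le_mul hpeak (exp_le_exp.2 (by linarith)) (exp_pos _).le (by positivity)
end
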